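/- arXiv:2409.06086 — 12 statements merged into one kernel-verified Lean document; each statement's English description precedes it below -/
import Mathlib

section
/- Let k ≥ 2 be an integer. Define sequences p, q by p(-1)=1, p(0)=0, q(-1)=0, q(0)=1, and for n ≥ 1: p(n) = (n^k + (n-1)^k)·p(n-1) + b(n-1)·p(n-2), q(n) = (n^k + (n-1)^k)·q(n-1) + b(n-1)·q(n-2), where b(0)=1 and b(n) = -n^(2k) for n ≥ 1. Then p(n)/q(n) converges to ζ(k) as n → ∞. -/
/-!
Writing `c n = n ^ k`, the recurrence is Euler's continued fraction for the series
`∑ 1 / c n`: both `∏_{j ≤ n} c j` and `(∏_{j ≤ n} c j) · ∑_{j ≤ n} 1 / c j` solve it, so matching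
the initial values gives `q n = (n!)^k` and `p n / q n = ∑_{j ≤ n} 1 / j ^ k`, the partial sums of `ζ(k)`.
-/

open Filter Finset

def SatisfiesEulerRecurrence {R : Type*} [Ring R] (c u : ℕ → R) : Prop :=
  ∀ n, u (n + 2) = (c (n + 2) + c (n + 1)) * u (n + 1) - c (n + 1) ^ 2 * u n

namespace SatisfiesEulerRecurrence

variable {R : Type*} [Ring R] {c u v : ℕ → R}

theorem eq (hu : SatisfiesEulerRecurrence c u) (hv : SatisfiesEulerRecurrence c v)
    (h0 : u 0 = v 0) (h1 : u 1 = v 1) : u = v := by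
  funext n
  induction n using Nat.twoStepInduction with
  | zero => exact h0
  | one => exact h1
  | more n ih₀ ih₁ => rw [hu, hv, ih₀, ih₁]

end SatisfiesEulerRecurrence

theorem satisfiesEulerRecurrence_prod {R : Type*} [CommRing R] (c : ℕ → R) :
    SatisfiesEulerRecurrence c fun n => ∏ j ∈ range n, c (j + 1) := by
  intro n
  simp only [prod_range_succ]
  ring

theorem satisfiesEulerRecurrence_prod_mul_sum_inv {K : Type*} [Field K] {c : ℕ → K}
    (hc : ∀ n, c (n + 1) ≠ 0) :
    SatisfiesEulerRecurrence c fun n =>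
      (∏ j ∈ range n, c (j + 1)) * ∑ j ∈ range n, (c (j + 1))⁻¹ := by
  intro n
  have h₁ := hc n
  have h₂ := hc (n + 1)
  simp only [prod_range_succ, sum_range_succ]
  field_simp
  ring

theorem satisfiesEulerRecurrence_of_int (k : ℕ) {b u : ℤ → ℝ}
    (hb : ∀ n : ℤ, 1 ≤ n → b n = -(n : ℝ) ^ (2 * k))
    (hu : ∀ n : ℤ, 1 ≤ n →
      u n = ((n : ℝ) ^ k + ((n : ℝ) - 1) ^ k) * u (n - 1) + b (n - 1) * u (n - 2)) :
    SatisfiesEulerRecurrence (fun n : ℕ => (n : ℝ) ^ k) fun n : ℕ => u n := by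
  intro n
  have hrec := hu (n + 2) (by omega)
  rw [show (n + 2 - 1 : ℤ) = (n + 1 : ℕ) by push_cast; ring, show (n + 2 - 2 : ℤ) = n by ring,
    hb (n + 1 : ℕ) (by omega)] at hrec
  push_cast at hrec ⊢
  rw [hrec]
  ring

theorem tendsto_sum_range_inv_pow_riemannZeta {k : ℕ} (hk : 1 < k) :
    Tendsto (fun n : ℕ => ((∑ j ∈ range n, (((j + 1 : ℕ) : ℝ) ^ k)⁻¹ : ℝ) : ℂ)) atTop
      (nhds (riemannZeta k)) := by
  have hsum : Summable (fun n : ℕ => 1 / (n : ℂ) ^ k) := by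
    have := Complex.summable_one_div_nat_cpow (p := k)
    simp only [Complex.cpow_natCast, Complex.natCast_re, Nat.one_lt_cast] at this
    exact this.mpr hk
  have hzeta := zeta_nat_eq_tsum_of_gt_one hk ▸ hsum.hasSum
  refine ((tendsto_add_atTop_iff_nat 1).mpr hzeta.tendsto_sum_nat).congr fun n => ?_
  rw [sum_range_succ']
  push_cast
  simp [zero_pow (by omega : k ≠ 0)]

theorem zeta_cf (k : ℕ) (hk : 2 ≤ k) (p q b : ℤ → ℝ)
    (hb0 : b 0 = 1) (hb : ∀ n : ℤ, 1 ≤ n → b n = -(n : ℝ) ^ (2 * k))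
    (hpm1 : p (-1) = 1) (hp0 : p 0 = 0) (hqm1 : q (-1) = 0) (hq0 : q 0 = 1)
    (hp : ∀ n : ℤ, 1 ≤ n →
      p n = ((n : ℝ) ^ k + ((n : ℝ) - 1) ^ k) * p (n - 1) + b (n - 1) * p (n - 2))
    (hq : ∀ n : ℤ, 1 ≤ n →
      q n = ((n : ℝ) ^ k + ((n : ℝ) - 1) ^ k) * q (n - 1) + b (n - 1) * q (n - 2)) :
    Tendsto (fun n : ℕ => ((p n / q n : ℝ) : ℂ)) atTop (nhds (riemannZeta k)) := by
  have hk0 : k ≠ 0 := by omega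
  set c : ℕ → ℝ := fun n => (n : ℝ) ^ k with hc_def
  have hc : ∀ n, c (n + 1) ≠ 0 := fun n => pow_ne_zero _ (Nat.cast_ne_zero.mpr n.succ_ne_zero)
  have hq_eq : (fun n : ℕ => q n) = fun n => ∏ j ∈ range n, c (j + 1) :=
    (satisfiesEulerRecurrence_of_int k hb hq).eq (satisfiesEulerRecurrence_prod c)
      (by simpa using hq0) (by simpa [hc_def, hq0, hqm1, hk0] using hq 1 le_rfl)
  have hp_eq : (fun n : ℕ => p n) =
      fun n => (∏ j ∈ range n, c (j + 1)) * ∑ j ∈ range n, (c (j + 1))⁻¹ :=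
    (satisfiesEulerRecurrence_of_int k hb hp).eq (satisfiesEulerRecurrence_prod_mul_sum_inv hc)
      (by simpa using hp0) (by simpa [hc_def, hp0, hpm1, hb0, hk0] using hp 1 le_rfl)
  have hratio : ∀ n : ℕ, p n / q n = ∑ j ∈ range n, (c (j + 1))⁻¹ := fun n => by
    rw [congrFun hp_eq n, congrFun hq_eq n,
      mul_div_cancel_left₀ _ (prod_ne_zero_iff.mpr fun j _ => hc j)]
  simp only [hratio]
  exact tendsto_sum_range_inv_pow_riemannZeta (by omega)
end

section
/- Define sequences p, q by p(-1)=1, p(0)=0, q(-1)=0, q(0)=1, and for n ≥ 1: p(n) = (2n³-3n²+3n-1)·p(n-1) + b(n-1)·p(n-2), q(n) = (2n³-3n²+3n-1)·q(n-1) + b(n-1)·q(n-2), where b(0)=1 and b(n) = -n⁶ for n ≥ 1. Then p(n)/q(n) converges to ζ(3) as n → ∞. -/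
/-!
With `r k = (k + 1) ^ 3`, the partial denominators are `n³ + (n - 1)³ = r (n - 1) + r (n - 2)`
and the partial numerators are `-r (n - 2) ^ 2`. These are Euler's continued fraction for the
series `∑ 1 / r k`: the recurrence is solved by `q n = ∏_{k<n} r k` and
`p n = q n * ∑_{k<n} 1 / r k`. So `p n / q n` is the `n`-th partial sum of `∑ 1 / (k + 1) ^ 3`,
which converges to `ζ(3)`.
-/

open Filter Finset

theorem eq_of_two_step_recurrence {R : Type*} [Add R] [Mul R] {c d u v : ℕ → R}
    (hu : ∀ n, u (n + 2) = c n * u (n + 1) + d n * u n)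
    (hv : ∀ n, v (n + 2) = c n * v (n + 1) + d n * v n)
    (h0 : u 0 = v 0) (h1 : u 1 = v 1) : u = v := by
  funext n
  induction n using Nat.twoStepInduction with
  | zero => exact h0
  | one => exact h1
  | more n ih₀ ih₁ => rw [hu, hv, ih₀, ih₁]

section EulerContinuedFraction

variable {K : Type*} [Field K] (r : ℕ → K)

def eulerDenom (n : ℕ) : K := ∏ k ∈ range n, r k

def eulerNumer (n : ℕ) : K := eulerDenom r n * ∑ k ∈ range n, (r k)⁻¹

theorem eulerDenom_add_two (n : ℕ) :
    eulerDenom r (n + 2) =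
      (r (n + 1) + r n) * eulerDenom r (n + 1) + -r n ^ 2 * eulerDenom r n := by
  simp only [eulerDenom, prod_range_succ]
  ring

theorem eulerNumer_add_two (hr : ∀ k, r k ≠ 0) (n : ℕ) :
    eulerNumer r (n + 2) =
      (r (n + 1) + r n) * eulerNumer r (n + 1) + -r n ^ 2 * eulerNumer r n := by
  simp only [eulerNumer, eulerDenom, prod_range_succ, sum_range_succ]
  field_simp [hr n, hr (n + 1)]
  ring

theorem eulerNumer_div_eulerDenom (hr : ∀ k, r k ≠ 0) (n : ℕ) :
    eulerNumer r n / eulerDenom r n = ∑ k ∈ range n, (r k)⁻¹ :=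
  mul_div_cancel_left₀ _ (prod_ne_zero_iff.mpr fun k _ => hr k)

end EulerContinuedFraction

def succCube (k : ℕ) : ℝ := ((k : ℝ) + 1) ^ 3

theorem succCube_ne_zero (k : ℕ) : succCube k ≠ 0 := by
  unfold succCube
  positivity

theorem hasSum_inv_succCube : HasSum (fun k => ((succCube k)⁻¹ : ℂ)) (riemannZeta 3) := by
  have h := LSeriesHasSum_one (s := 3) (by norm_num)
  rw [LSeriesHasSum, ← hasSum_nat_add_iff' 1, range_one, sum_singleton, LSeries.term_zero,
    sub_zero] at h
  refine h.congr_fun fun k => ?_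
  rw [LSeries.term_of_ne_zero k.succ_ne_zero, Complex.cpow_ofNat, succCube]
  simp

def ZetaThreeRecurrence (b f : ℤ → ℝ) : Prop :=
  ∀ n : ℤ, 1 ≤ n →
    f n = (2 * (n : ℝ) ^ 3 - 3 * (n : ℝ) ^ 2 + 3 * (n : ℝ) - 1) * f (n - 1)
      + b (n - 1) * f (n - 2)

namespace ZetaThreeRecurrence

variable {b f : ℤ → ℝ}

theorem apply_one (hf : ZetaThreeRecurrence b f) (hb0 : b 0 = 1) : f 1 = f 0 + f (-1) := by
  norm_num [hf 1 le_rfl, hb0]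

theorem apply_natCast_add_two (hf : ZetaThreeRecurrence b f)
    (hb : ∀ n : ℤ, 1 ≤ n → b n = -(n : ℝ) ^ 6) (n : ℕ) :
    f (n + 2 : ℕ) =
      (succCube (n + 1) + succCube n) * f (n + 1 : ℕ) + -succCube n ^ 2 * f n := by
  have h := hf (n + 2) (by omega)
  rw [show (n : ℤ) + 2 - 1 = (n + 1 : ℕ) by push_cast; ring,
    show (n : ℤ) + 2 - 2 = n by ring, hb (n + 1 : ℕ) (by omega)] at h
  push_cast at h ⊢
  rw [h, succCube, succCube]
  push_cast
  ring

end ZetaThreeRecurrence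

theorem zeta_three_cf (p q b : ℤ → ℝ)
    (hb0 : b 0 = 1) (hb : ∀ n : ℤ, 1 ≤ n → b n = -(n : ℝ) ^ 6)
    (hpm1 : p (-1) = 1) (hp0 : p 0 = 0) (hqm1 : q (-1) = 0) (hq0 : q 0 = 1)
    (hp : ∀ n : ℤ, 1 ≤ n →
      p n = (2 * (n : ℝ) ^ 3 - 3 * (n : ℝ) ^ 2 + 3 * (n : ℝ) - 1) * p (n - 1)
        + b (n - 1) * p (n - 2))
    (hq : ∀ n : ℤ, 1 ≤ n →
      q n = (2 * (n : ℝ) ^ 3 - 3 * (n : ℝ) ^ 2 + 3 * (n : ℝ) - 1) * q (n - 1)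
        + b (n - 1) * q (n - 2)) :
    Tendsto (fun n : ℕ => ((p n / q n : ℝ) : ℂ)) atTop (nhds (riemannZeta 3)) := by
  have hq_eq : (fun n : ℕ => q n) = eulerDenom succCube :=
    eq_of_two_step_recurrence (ZetaThreeRecurrence.apply_natCast_add_two hq hb)
      (eulerDenom_add_two succCube) (by simpa [eulerDenom] using hq0)
      (by simp [ZetaThreeRecurrence.apply_one hq hb0, hq0, hqm1, eulerDenom, succCube])
  have hp_eq : (fun n : ℕ => p n) = eulerNumer succCube :=
    eq_of_two_step_recurrence (ZetaThreeRecurrence.apply_natCast_add_two hp hb)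
      (eulerNumer_add_two succCube succCube_ne_zero) (by simpa [eulerNumer, eulerDenom] using hp0)
      (by simp [ZetaThreeRecurrence.apply_one hp hb0, hp0, hpm1, eulerNumer, eulerDenom,
        succCube])
  have hpq (n : ℕ) : p n / q n = ∑ k ∈ range n, (succCube k)⁻¹ := by
    rw [← eulerNumer_div_eulerDenom succCube succCube_ne_zero, ← hp_eq, ← hq_eq]
  simp_rw [hpq]
  push_cast
  exact hasSum_inv_succCube.tendsto_sum_nat
end

section
/- Define sequences p, q by p(-1)=1, p(0)=0, q(-1)=0, q(0)=1, and for n ≥ 1: p(n) = (10n-5)·p(n-1) + b(n-1)·p(n-2), q(n) = (10n-5)·q(n-1) + b(n-1)·q(n-2), where b(0)=3 and b(n) = -9n² for n ≥ 1. Then p(n)/q(n) converges to log 2 as n → ∞. -/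
/-!
Both `q n * log 2 - p n` and the normalized integrals
`n! 3^(2n+1) / 2^(n+1) * ∫_{-1}^{1} (1 - t²)^n / (5 - 3t)^(n+1) dt`
satisfy the three-term recurrence `u (n+2) = (10n + 15) u (n+1) - 9 (n+1)² u n`, with the same
values `log 2` and `5 log 2 - 3` at `n = 0, 1`; hence they coincide. On `[-1, 1]` we have
`1 - t² ≤ (2/9)(5 - 3t)`, so the remainder is at most `3/2 · n!`, while the recurrence forces
`q n ≥ 4^n n!`. Thus `log 2 - p n / q n = O(4^(-n))`.
-/

open Filter Real Set intervalIntegral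

namespace LogTwoCF

def Recurrence (u : ℕ → ℝ) : Prop :=
  ∀ n : ℕ, u (n + 2) = (10 * n + 15) * u (n + 1) - 9 * ((n : ℝ) + 1) ^ 2 * u n

namespace Recurrence

variable {u v : ℕ → ℝ}

theorem sub (hu : Recurrence u) (hv : Recurrence v) : Recurrence (u - v) := fun n => by
  simp only [Pi.sub_apply, hu n, hv n]; ring

theorem mul_const (hu : Recurrence u) (c : ℝ) : Recurrence (fun n => u n * c) := fun n => by
  simp only [hu n]; ring

theorem ext (hu : Recurrence u) (hv : Recurrence v) (h0 : u 0 = v 0) (h1 : u 1 = v 1) :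
    u = v := by
  funext n
  induction n using Nat.twoStepInduction with
  | zero => exact h0
  | one => exact h1
  | more n ih₀ ih₁ => rw [hu n, hv n, ih₀, ih₁]

theorem pos_and_four_mul_le (hu : Recurrence u) (h0 : 0 < u 0) (h1 : 4 * u 0 ≤ u 1) (n : ℕ) :
    0 < u n ∧ 4 * ((n : ℝ) + 1) * u n ≤ u (n + 1) := by
  induction n with
  | zero => simpa using ⟨h0, h1⟩
  | succ n ih =>
    obtain ⟨hpos, hstep⟩ := ih
    have hpos' : 0 < u (n + 1) := lt_of_lt_of_le (by positivity) hstep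
    refine ⟨hpos', ?_⟩
    have hdamp : 9 * ((n : ℝ) + 1) ^ 2 * u n ≤ 9 / 4 * ((n : ℝ) + 1) * u (n + 1) := by
      nlinarith [mul_le_mul_of_nonneg_left hstep (by positivity : (0 : ℝ) ≤ 9 * ((n : ℝ) + 1) / 4)]
    rw [hu n]
    push_cast
    -- `10n + 15 - (9/4)(n+1) ≥ 4(n+2)`
    nlinarith

theorem four_pow_mul_factorial_le (hu : Recurrence u) (h0 : u 0 = 1) (h1 : 4 ≤ u 1) (n : ℕ) :
    (4 : ℝ) ^ n * n.factorial ≤ u n := by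
  have hgrowth := hu.pos_and_four_mul_le (by rw [h0]; norm_num) (by rwa [h0, mul_one])
  induction n with
  | zero => simp [h0]
  | succ n ih =>
    calc (4 : ℝ) ^ (n + 1) * (n + 1).factorial
        = 4 * ((n : ℝ) + 1) * ((4 : ℝ) ^ n * n.factorial) := by
          rw [Nat.factorial_succ]; push_cast; ring
      _ ≤ 4 * ((n : ℝ) + 1) * u n := by gcongr
      _ ≤ u (n + 1) := (hgrowth n).2

end Recurrence

theorem recurrence_of_int (u b : ℤ → ℝ) (hb : ∀ n : ℤ, 1 ≤ n → b n = -9 * (n : ℝ) ^ 2)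
    (hu : ∀ n : ℤ, 1 ≤ n → u n = (10 * (n : ℝ) - 5) * u (n - 1) + b (n - 1) * u (n - 2)) :
    Recurrence (fun n : ℕ => u n) := fun n => by
  have h := hu (n + 2) (by omega)
  rw [show (n : ℤ) + 2 - 1 = n + 1 by ring, show (n : ℤ) + 2 - 2 = n by ring,
    hb (n + 1) (by omega)] at h
  push_cast
  rw [h]
  push_cast
  ring

theorem two_le_five_sub_three_mul {t : ℝ} (ht : t ∈ Icc (-1 : ℝ) 1) : 2 ≤ 5 - 3 * t := by
  linarith [ht.2]

theorem one_sub_sq_nonneg {t : ℝ} (ht : t ∈ Icc (-1 : ℝ) 1) : 0 ≤ 1 - t ^ 2 := by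
  nlinarith [ht.1, ht.2]

theorem hasDerivAt_five_sub_three_mul (t : ℝ) : HasDerivAt (fun t : ℝ => 5 - 3 * t) (-3) t := by
  simpa using ((hasDerivAt_id t).const_mul 3).const_sub 5

noncomputable def integrand (n : ℕ) (t : ℝ) : ℝ := (1 - t ^ 2) ^ n / (5 - 3 * t) ^ (n + 1)

theorem intervalIntegrable_integrand (n : ℕ) :
    IntervalIntegrable (integrand n) MeasureTheory.volume (-1) 1 := by
  refine ContinuousOn.intervalIntegrable (ContinuousOn.div (by fun_prop) (by fun_prop) ?_)
  intro t ht
  rw [uIcc_of_le (by norm_num)] at ht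
  have := two_le_five_sub_three_mul ht
  positivity

theorem integrand_le {n : ℕ} {t : ℝ} (ht : t ∈ Icc (-1 : ℝ) 1) :
    integrand n t ≤ (2 / 9) ^ n / 2 := by
  have hden := two_le_five_sub_three_mul ht
  have hquot : 1 - t ^ 2 ≤ 2 / 9 * (5 - 3 * t) := by nlinarith [sq_nonneg (3 * t - 1)]
  have hratio : (1 - t ^ 2) / (5 - 3 * t) ≤ 2 / 9 := by rwa [div_le_iff₀ (by linarith)]
  calc integrand n t = ((1 - t ^ 2) / (5 - 3 * t)) ^ n / (5 - 3 * t) := by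
        rw [integrand, div_pow, div_div, ← pow_succ]
    _ ≤ (2 / 9) ^ n / 2 :=
        div_le_div₀ (by positivity)
          (pow_le_pow_left₀ (div_nonneg (one_sub_sq_nonneg ht) (by linarith)) hratio n)
          (by norm_num) hden

noncomputable def remainderIntegral (n : ℕ) : ℝ := ∫ t in (-1 : ℝ)..1, integrand n t

theorem remainderIntegral_nonneg (n : ℕ) : 0 ≤ remainderIntegral n := by
  refine integral_nonneg (by norm_num) fun t ht => ?_
  have := two_le_five_sub_three_mul ht
  have := one_sub_sq_nonneg ht
  unfold integrand
  positivity

theorem remainderIntegral_le (n : ℕ) : remainderIntegral n ≤ (2 / 9) ^ n := by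
  calc remainderIntegral n ≤ ∫ _ in (-1 : ℝ)..1, (2 / 9 : ℝ) ^ n / 2 :=
        integral_mono_on (by norm_num) (intervalIntegrable_integrand n) intervalIntegrable_const
          fun t ht => integrand_le ht
    _ = (2 / 9) ^ n := by rw [integral_const, smul_eq_mul]; ring

theorem log_eight : Real.log 8 = 3 * Real.log 2 := by
  rw [show (8 : ℝ) = 2 ^ 3 by norm_num, Real.log_pow]; push_cast; ring

theorem remainderIntegral_zero : remainderIntegral 0 = 2 / 3 * Real.log 2 := by
  have hderiv : ∀ t ∈ uIcc (-1 : ℝ) 1,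
      HasDerivAt (fun t => -(1 / 3) * Real.log (5 - 3 * t)) (integrand 0 t) t := by
    intro t ht
    rw [uIcc_of_le (by norm_num)] at ht
    have := two_le_five_sub_three_mul ht
    refine (((hasDerivAt_five_sub_three_mul t).log (by linarith)).const_mul _).congr_deriv ?_
    rw [integrand, zero_add, pow_one, pow_zero]
    field_simp
  rw [remainderIntegral, integral_eq_sub_of_hasDerivAt hderiv (intervalIntegrable_integrand 0)]
  norm_num [log_eight]
  ring

theorem remainderIntegral_one : remainderIntegral 1 = 20 / 27 * Real.log 2 - 4 / 9 := by
  have hderiv : ∀ t ∈ uIcc (-1 : ℝ) 1,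
      HasDerivAt (fun t => -(1 / 9) * t - 10 / 27 * Real.log (5 - 3 * t) - 16 / 27 * (5 - 3 * t)⁻¹)
        (integrand 1 t) t := by
    intro t ht
    rw [uIcc_of_le (by norm_num)] at ht
    have := two_le_five_sub_three_mul ht
    have hne : 5 - 3 * t ≠ 0 := by linarith
    have hlin := ((hasDerivAt_id t).const_mul (-(1 / 9) : ℝ)).sub
      (((hasDerivAt_five_sub_three_mul t).log hne).const_mul (10 / 27 : ℝ))
    refine (hlin.sub (((hasDerivAt_five_sub_three_mul t).inv hne).const_mul _)).congr_deriv ?_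
    rw [integrand]
    field_simp
    ring
  rw [remainderIntegral, integral_eq_sub_of_hasDerivAt hderiv (intervalIntegrable_integrand 1)]
  norm_num [log_eight]
  ring

/-- Integration of the derivative of `(1 - t²)^(n+1) (3t² - 10t + 3) / (5 - 3t)^(n+2)`, which
vanishes at `t = ±1`. -/
theorem remainderIntegral_recurrence (n : ℕ) :
    9 * ((n : ℝ) + 2) * remainderIntegral (n + 2) =
      (20 * n + 30) * remainderIntegral (n + 1) - (4 * n + 4) * remainderIntegral n := by
  set G : ℝ → ℝ := fun t => 9 * ((n : ℝ) + 2) * integrand (n + 2) t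
    - (20 * n + 30) * integrand (n + 1) t + (4 * n + 4) * integrand n t with hG
  have hderiv : ∀ t ∈ uIcc (-1 : ℝ) 1, HasDerivAt
      (fun t => (1 - t ^ 2) ^ (n + 1) * (3 * t ^ 2 - 10 * t + 3) / (5 - 3 * t) ^ (n + 2)) (G t) t := by
    intro t ht
    rw [uIcc_of_le (by norm_num)] at ht
    have := two_le_five_sub_three_mul ht
    have hne : 5 - 3 * t ≠ 0 := by linarith
    -- `field_simp` normalizes the denominator to `5 - t * 3` and needs it nonzero in that form.
    have hne' : 5 - t * 3 ≠ 0 := by linarith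
    have hnum := (((hasDerivAt_pow 2 t).const_sub 1).pow (n + 1)).mul
      ((((hasDerivAt_pow 2 t).const_mul 3).sub ((hasDerivAt_id t).const_mul 10)).add_const 3)
    refine (hnum.div ((hasDerivAt_five_sub_three_mul t).pow (n + 2))
      (pow_ne_zero _ hne)).congr_deriv ?_
    simp only [hG, integrand, Nat.add_sub_cancel, id_eq, Pi.pow_apply, Pi.mul_apply,
      Pi.sub_apply]
    push_cast
    field_simp
    ring
  have hint := intervalIntegrable_integrand
  have hG_int : IntervalIntegrable G MeasureTheory.volume (-1) 1 :=
    (((hint _).const_mul _).sub ((hint _).const_mul _)).add ((hint _).const_mul _)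
  have hzero : ∫ t in (-1 : ℝ)..1, G t = 0 := by
    rw [integral_eq_sub_of_hasDerivAt hderiv hG_int]; norm_num
  rw [hG, integral_add (((hint _).const_mul _).sub ((hint _).const_mul _)) ((hint _).const_mul _),
    integral_sub ((hint _).const_mul _) ((hint _).const_mul _), integral_const_mul,
    integral_const_mul, integral_const_mul] at hzero
  simp only [remainderIntegral]
  linarith

/-- The normalization turns `remainderIntegral_recurrence` into the recurrence of the
continued fraction; this is `q n * log 2 - p n`. -/
noncomputable def remainder (n : ℕ) : ℝ :=
  n.factorial * 3 ^ (2 * n + 1) / 2 ^ (n + 1) * remainderIntegral n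

theorem remainder_zero : remainder 0 = Real.log 2 := by
  rw [remainder, remainderIntegral_zero]; norm_num; ring

theorem remainder_one : remainder 1 = 5 * Real.log 2 - 3 := by
  rw [remainder, remainderIntegral_one]; norm_num; ring

theorem recurrence_remainder : Recurrence remainder := fun n => by
  simp only [remainder, Nat.factorial_succ]
  push_cast
  linear_combination ((n : ℝ) + 1) * n.factorial * 3 ^ (2 * n + 3) / 2 ^ (n + 3) *
    remainderIntegral_recurrence n

theorem remainder_nonneg (n : ℕ) : 0 ≤ remainder n := by
  have := remainderIntegral_nonneg n
  unfold remainder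
  positivity

theorem remainder_le (n : ℕ) : remainder n ≤ 3 / 2 * n.factorial := by
  calc remainder n ≤ n.factorial * 3 ^ (2 * n + 1) / 2 ^ (n + 1) * (2 / 9) ^ n := by
        unfold remainder; gcongr; exact remainderIntegral_le n
    _ = 3 / 2 * n.factorial := by
        rw [div_pow, show (9 : ℝ) ^ n = 3 ^ (2 * n) by rw [pow_mul]; norm_num, pow_succ, pow_succ]
        field_simp

theorem tendsto_remainder_div (q : ℕ → ℝ) (hq : ∀ n, (4 : ℝ) ^ n * n.factorial ≤ q n) :
    Tendsto (fun n => remainder n / q n) atTop (nhds 0) := by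
  have hq_pos (n : ℕ) : 0 < q n := lt_of_lt_of_le (by positivity) (hq n)
  have hgeom : Tendsto (fun n : ℕ => 3 / 2 * (1 / 4 : ℝ) ^ n) atTop (nhds 0) := by
    simpa using (tendsto_pow_atTop_nhds_zero_of_lt_one (by norm_num : (0 : ℝ) ≤ 1 / 4)
      (by norm_num)).const_mul (3 / 2 : ℝ)
  refine squeeze_zero (fun n => div_nonneg (remainder_nonneg n) (hq_pos n).le) (fun n => ?_) hgeom
  calc remainder n / q n ≤ 3 / 2 * n.factorial / ((4 : ℝ) ^ n * n.factorial) :=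
        div_le_div₀ (by positivity) (remainder_le n) (by positivity) (hq n)
    _ = 3 / 2 * (1 / 4 : ℝ) ^ n := by field_simp; rw [← mul_pow]; norm_num

end LogTwoCF

open LogTwoCF

theorem log_two_cf (p q b : ℤ → ℝ)
    (hb0 : b 0 = 3) (hb : ∀ n : ℤ, 1 ≤ n → b n = -9 * (n : ℝ) ^ 2)
    (hpm1 : p (-1) = 1) (hp0 : p 0 = 0) (hqm1 : q (-1) = 0) (hq0 : q 0 = 1)
    (hp : ∀ n : ℤ, 1 ≤ n →
      p n = (10 * (n : ℝ) - 5) * p (n - 1) + b (n - 1) * p (n - 2))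
    (hq : ∀ n : ℤ, 1 ≤ n →
      q n = (10 * (n : ℝ) - 5) * q (n - 1) + b (n - 1) * q (n - 2)) :
    Tendsto (fun n : ℕ => p n / q n) atTop (nhds (Real.log 2)) := by
  have hp1 : p 1 = 3 := by rw [hp 1 le_rfl]; norm_num [hp0, hpm1, hb0]
  have hq1 : q 1 = 5 := by rw [hq 1 le_rfl]; norm_num [hq0, hqm1, hb0]
  have hP := recurrence_of_int p b hb hp
  have hQ := recurrence_of_int q b hb hq
  have hremainder : (fun n : ℕ => q n * Real.log 2 - p n) = remainder :=
    ((hQ.mul_const _).sub hP).ext recurrence_remainder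
      (by simp [hp0, hq0, remainder_zero]) (by simp [hp1, hq1, remainder_one])
  have hq_ge := hQ.four_pow_mul_factorial_le (by simpa using hq0) (by norm_num [hq1])
  have hpq (n : ℕ) : p n / q n = Real.log 2 - remainder n / q n := by
    have hq_pos : 0 < q n := lt_of_lt_of_le (by positivity) (hq_ge n)
    rw [← congrFun hremainder n]
    field_simp
    ring
  simpa [hpq] using (tendsto_remainder_div _ hq_ge).const_sub (Real.log 2)
end

section
/- Define sequences p, q by p(-1)=1, p(0)=0, q(-1)=0, q(0)=1, p(1) = 1·p(0) + 4·p(-1), q(1) = 1·q(0) + 4·q(-1), and for n ≥ 2: p(n) = 2·p(n-1) + (2n-3)²·p(n-2), q(n) = 2·q(n-1) + (2n-3)²·q(n-2). Then p(n)/q(n) converges to π as n → ∞. -/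
/-!
The denominators are the odd double factorials `qₙ = 1·3·⋯·(2n-1)` and the numerators are
`pₙ = qₙ · Sₙ`, where `Sₙ = 4 ∑_{k<n} (-1)ᵏ/(2k+1)` is the Leibniz partial sum: both sequences
satisfy the defining recurrence with the right initial values, so `pₙ/qₙ = Sₙ → π`.
-/

open Filter Real Finset

theorem eq_of_linear_recurrence {R : Type*} [Add R] [Mul R] (a b u v : ℕ → R)
    (hu : ∀ n, u (n + 2) = a n * u (n + 1) + b n * u n)
    (hv : ∀ n, v (n + 2) = a n * v (n + 1) + b n * v n)
    (h0 : u 0 = v 0) (h1 : u 1 = v 1) : u = v := by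
  have pair : ∀ n, u n = v n ∧ u (n + 1) = v (n + 1) := by
    intro n
    induction n with
    | zero => exact ⟨h0, h1⟩
    | succ n ih => exact ⟨ih.2, by rw [hu, hv, ih.1, ih.2]⟩
  exact funext fun n => (pair n).1

noncomputable def leibnizSum (n : ℕ) : ℝ :=
  4 * ∑ k ∈ range n, (-1 : ℝ) ^ k / (2 * k + 1)

lemma leibnizSum_succ (n : ℕ) :
    leibnizSum (n + 1) = leibnizSum n + 4 * (-1 : ℝ) ^ n / (2 * n + 1) := by
  simp only [leibnizSum, sum_range_succ]
  ring

lemma tendsto_leibnizSum : Tendsto leibnizSum atTop (nhds π) := by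
  have h := tendsto_sum_pi_div_four.const_mul (4 : ℝ)
  rwa [mul_div_cancel₀ π (four_ne_zero' ℝ)] at h

def oddProd (n : ℕ) : ℝ := ∏ k ∈ range n, (2 * k + 1 : ℝ)

lemma oddProd_succ (n : ℕ) : oddProd (n + 1) = (2 * n + 1) * oddProd n := by
  rw [oddProd, prod_range_succ, mul_comm]
  rfl

lemma oddProd_pos (n : ℕ) : 0 < oddProd n :=
  prod_pos fun _ _ => by positivity

lemma oddProd_recurrence (n : ℕ) :
    oddProd (n + 2) = 2 * oddProd (n + 1) + (2 * n + 1) ^ 2 * oddProd n := by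
  rw [oddProd_succ, oddProd_succ]
  push_cast
  ring

lemma oddProd_mul_leibnizSum_recurrence (n : ℕ) :
    oddProd (n + 2) * leibnizSum (n + 2) =
      2 * (oddProd (n + 1) * leibnizSum (n + 1)) +
        (2 * n + 1) ^ 2 * (oddProd n * leibnizSum n) := by
  rw [oddProd_succ, oddProd_succ, leibnizSum_succ (n + 1), leibnizSum_succ n]
  have h₁ : (2 * n + 1 : ℝ) ≠ 0 := by positivity
  have h₂ : (2 * (n + 1 : ℕ) + 1 : ℝ) ≠ 0 := by positivity
  push_cast at h₂ ⊢
  field_simp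
  ring

lemma recurrence_shift (f : ℤ → ℝ)
    (hf : ∀ n : ℤ, 2 ≤ n → f n = 2 * f (n - 1) + (2 * (n : ℝ) - 3) ^ 2 * f (n - 2)) (n : ℕ) :
    f (n + 2 : ℕ) = 2 * f (n + 1 : ℕ) + (2 * n + 1) ^ 2 * f n := by
  have h := hf (n + 2) (by omega)
  push_cast at h ⊢
  rw [show (n : ℤ) + 2 - 1 = n + 1 by ring, show (n : ℤ) + 2 - 2 = n by ring] at h
  rw [h]
  ring

theorem pi_cf (p q : ℤ → ℝ)
    (hpm1 : p (-1) = 1) (hp0 : p 0 = 0) (hqm1 : q (-1) = 0) (hq0 : q 0 = 1)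
    (hp1 : p 1 = 1 * p 0 + 4 * p (-1)) (hq1 : q 1 = 1 * q 0 + 4 * q (-1))
    (hp : ∀ n : ℤ, 2 ≤ n →
      p n = 2 * p (n - 1) + (2 * (n : ℝ) - 3) ^ 2 * p (n - 2))
    (hq : ∀ n : ℤ, 2 ≤ n →
      q n = 2 * q (n - 1) + (2 * (n : ℝ) - 3) ^ 2 * q (n - 2)) :
    Tendsto (fun n : ℕ => p n / q n) atTop (nhds π) := by
  have hq_eq : (fun n : ℕ => q n) = oddProd :=
    eq_of_linear_recurrence (fun _ => 2) (fun n => (2 * n + 1 : ℝ) ^ 2) _ _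
      (recurrence_shift q hq) oddProd_recurrence
      (by simp [hq0, oddProd]) (by simp [hq1, hq0, hqm1, oddProd])
  have hp_eq : (fun n : ℕ => p n) = fun n => oddProd n * leibnizSum n :=
    eq_of_linear_recurrence (fun _ => 2) (fun n => (2 * n + 1 : ℝ) ^ 2) _ _
      (recurrence_shift p hp) oddProd_mul_leibnizSum_recurrence
      (by simp [hp0, leibnizSum]) (by simp [hp1, hp0, hpm1, oddProd, leibnizSum])
  have hratio : (fun n : ℕ => p n / q n) = leibnizSum := funext fun n => by
    rw [congrFun hp_eq n, congrFun hq_eq n, mul_div_cancel_left₀ _ (oddProd_pos n).ne']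
  exact hratio ▸ tendsto_leibnizSum
end

section
/- Define sequences p, q by p(-1)=1, p(0)=2, q(-1)=0, q(0)=1, and for n ≥ 1: p(n) = (n+1)·p(n-1) + (n+1)·p(n-2), q(n) = (n+1)·q(n-1) + (n+1)·q(n-2). Then p(n)/q(n) converges to e = exp(1) as n → ∞. -/
/-! With the index shifted by two, `p n = (n + 2)!` and `q n` is the number of derangements of
`n + 2` points: both satisfy the recurrence with the right initial values. Hence `q n / p n` is the
probability that a random permutation of `n + 2` points has no fixed point, which tends to
`exp (-1)`. -/

open Filter Real
open scoped Nat

theorem eq_of_cf_recurrence (f : ℤ → ℝ) (u : ℕ → ℝ)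
    (hf : ∀ n : ℤ, 1 ≤ n → f n = ((n : ℝ) + 1) * f (n - 1) + ((n : ℝ) + 1) * f (n - 2))
    (hu : ∀ m : ℕ, u (m + 2) = (m + 2) * (u (m + 1) + u m))
    (hm1 : f (-1) = u 0) (h0 : f 0 = u 1) (m : ℕ) :
    f (m - 1) = u m := by
  suffices h : ∀ m : ℕ, f (m - 1) = u m ∧ f m = u (m + 1) from (h m).1
  intro m
  induction m with
  | zero => exact ⟨by simpa using hm1, by simpa using h0⟩
  | succ k ih =>
    refine ⟨by simpa using ih.2, ?_⟩
    have hk : (((k + 1 : ℕ) : ℤ) : ℝ) + 1 = (k : ℝ) + 2 := by push_cast; ring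
    rw [hf _ (by omega), hk, hu, ← ih.1, ← ih.2]
    simp only [Nat.cast_add, Nat.cast_one, add_sub_cancel_right,
      show ((k : ℤ) + 1 - 2) = k - 1 by ring]
    ring

theorem factorial_add_two (n : ℕ) : (n + 2)! = (n + 1) * (n ! + (n + 1)!) := by
  simp only [Nat.factorial_succ]
  ring

theorem tendsto_factorial_div_numDerangements :
    Tendsto (fun n : ℕ => (n ! : ℝ) / numDerangements n) atTop (nhds (exp 1)) := by
  have h := numDerangements_tendsto_inv_e.inv₀ (exp_ne_zero (-1))
  simpa only [inv_div, ← exp_neg, neg_neg] using h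

theorem e_cf (p q : ℤ → ℝ)
    (hpm1 : p (-1) = 1) (hp0 : p 0 = 2) (hqm1 : q (-1) = 0) (hq0 : q 0 = 1)
    (hp : ∀ n : ℤ, 1 ≤ n →
      p n = ((n : ℝ) + 1) * p (n - 1) + ((n : ℝ) + 1) * p (n - 2))
    (hq : ∀ n : ℤ, 1 ≤ n →
      q n = ((n : ℝ) + 1) * q (n - 1) + ((n : ℝ) + 1) * q (n - 2)) :
    Tendsto (fun n : ℕ => p n / q n) atTop (nhds (Real.exp 1)) := by
  have hp_fact : ∀ m : ℕ, p (m - 1) = ((m + 1) ! : ℕ) :=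
    eq_of_cf_recurrence p _ hp (fun m => by push_cast [factorial_add_two (m + 1)]; ring)
      (by simpa using hpm1) (by simpa using hp0)
  have hq_der : ∀ m : ℕ, q (m - 1) = numDerangements (m + 1) :=
    eq_of_cf_recurrence q _ hq (fun m => by push_cast [numDerangements_add_two]; ring)
      (by simpa using hqm1) (by simp [hq0, numDerangements_add_two])
  have hpq : ∀ n : ℕ, p n / q n = ((n + 2) ! : ℝ) / numDerangements (n + 2) := fun n => by
    simpa using congr($(hp_fact (n + 1)) / $(hq_der (n + 1)))
  exact (tendsto_factorial_div_numDerangements.comp (tendsto_add_atTop_nat 2)).congr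
    fun n => (hpq n).symm
end

section
/- Let z be a real number. Define sequences p, q by p(-1)=1, p(0)=0, q(-1)=0, q(0)=1, and for n ≥ 1: p(n) = (2n-1)·p(n-1) + b(n-1)·p(n-2), q(n) = (2n-1)·q(n-1) + b(n-1)·q(n-2), where b(0)=z and b(n)=z² for n ≥ 1. Then p(n)/q(n) converges to tanh(z) as n → ∞. -/
/-!
With `J n = ∫_{-1}^{1} exp (z t) (1 - t²)ⁿ dt`, integration by parts gives
`z² J (n + 2) = 4 (n + 1) (n + 2) J n - (2n + 3) (2n + 4) J (n + 1)`, so the rescaled integrals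
`r n = (-1)ⁿ⁺¹ z²ⁿ⁺¹ J n / (2ⁿ⁺¹ n!)` satisfy the same three-term recurrence as `p` and `q`.
Comparing `n = 0, 1` gives `r n = p n cosh z - q n sinh z`. Since `|J n| ≤ 2 exp |z|`, `r n` tends
to `0` like `(z² / 2)ⁿ / n!`, and since `q n ≥ 1` and `cosh z ≥ 1`, `|p n / q n - tanh z| ≤ |r n|`.
-/

open Filter Real Topology intervalIntegral
open scoped Nat

noncomputable def lambertIntegral (z : ℝ) (n : ℕ) : ℝ :=
  ∫ t in (-1 : ℝ)..1, exp (z * t) * (1 - t ^ 2) ^ n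

lemma abs_lambertIntegral_le (z : ℝ) (n : ℕ) : |lambertIntegral z n| ≤ 2 * exp |z| := by
  have hbound : ∀ t ∈ Set.uIoc (-1 : ℝ) 1, ‖exp (z * t) * (1 - t ^ 2) ^ n‖ ≤ exp |z| := by
    intro t ht
    rw [Set.uIoc_of_le (by norm_num)] at ht
    have ht' : |t| ≤ 1 := abs_le.2 ⟨ht.1.le, ht.2⟩
    have hw : 0 ≤ 1 - t ^ 2 := sub_nonneg.2 ((sq_le_one_iff_abs_le_one t).2 ht')
    rw [norm_mul, norm_of_nonneg (exp_pos _).le, norm_of_nonneg (pow_nonneg hw n)]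
    calc exp (z * t) * (1 - t ^ 2) ^ n ≤ exp |z| * 1 := by
          gcongr
          · calc z * t ≤ |z * t| := le_abs_self _
              _ = |z| * |t| := abs_mul z t
              _ ≤ |z| := mul_le_of_le_one_right (abs_nonneg z) ht'
          · exact pow_le_one₀ hw (sub_le_self 1 (sq_nonneg t))
      _ = exp |z| := mul_one _
  calc |lambertIntegral z n| ≤ exp |z| * |1 - (-1)| := norm_integral_le_of_norm_le_const hbound
    _ = 2 * exp |z| := by norm_num [mul_comm]

lemma integral_exp_mul_mul_add_deriv {g g' : ℝ → ℝ} (hg : ∀ t, HasDerivAt g (g' t) t)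
    (hg' : Continuous g') (z a b : ℝ) :
    ∫ t in a..b, exp (z * t) * (z * g t + g' t) = exp (z * b) * g b - exp (z * a) * g a := by
  have hcont : Continuous g := continuous_iff_continuousAt.2 fun t => (hg t).continuousAt
  refine integral_eq_sub_of_hasDerivAt (f := fun t => exp (z * t) * g t) (fun t _ => ?_)
    ((by fun_prop : Continuous fun t => exp (z * t) * (z * g t + g' t)).intervalIntegrable _ _)
  exact (((hasDerivAt_id' t).const_mul z).exp.mul (hg t)).congr_deriv (by ring)

lemma mul_lambertIntegral_zero (z : ℝ) : z * lambertIntegral z 0 = 2 * sinh z := by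
  have h := integral_exp_mul_mul_add_deriv (fun t => hasDerivAt_const t (1 : ℝ)) continuous_const
    z (-1) 1
  calc z * lambertIntegral z 0 = ∫ t in (-1 : ℝ)..1, exp (z * t) * (z * 1 + 0) := by
        rw [lambertIntegral, ← integral_const_mul]
        congr 1 with t
        ring
    _ = 2 * sinh z := by
        rw [h, sinh_eq]
        simp only [mul_one, mul_neg_one]
        ring

lemma lambertIntegral_one (z : ℝ) :
    z ^ 3 * lambertIntegral z 1 = 4 * z * cosh z - 4 * sinh z := by
  have hg (t : ℝ) : HasDerivAt (fun t => z ^ 2 * (1 - t ^ 2) + 2 * z * t - 2)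
      (-2 * z ^ 2 * t + 2 * z) t := by
    refine ((((hasDerivAt_pow 2 t).const_sub 1).const_mul (z ^ 2)).fun_add
      ((hasDerivAt_id' t).const_mul (2 * z))).sub_const 2 |>.congr_deriv ?_
    norm_num
    ring
  have h := integral_exp_mul_mul_add_deriv hg (by fun_prop) z (-1) 1
  calc z ^ 3 * lambertIntegral z 1
      = ∫ t in (-1 : ℝ)..1, exp (z * t) *
          (z * (z ^ 2 * (1 - t ^ 2) + 2 * z * t - 2) + (-2 * z ^ 2 * t + 2 * z)) := by
        rw [lambertIntegral, ← integral_const_mul]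
        congr 1 with t
        ring
    _ = 4 * z * cosh z - 4 * sinh z := by
        rw [h, cosh_eq, sinh_eq]
        simp only [mul_one, mul_neg_one]
        ring

lemma lambertIntegral_add_two (z : ℝ) (n : ℕ) :
    z ^ 2 * lambertIntegral z (n + 2) = 4 * (n + 1) * (n + 2) * lambertIntegral z n
      - (2 * n + 3) * (2 * n + 4) * lambertIntegral z (n + 1) := by
  set w : ℝ → ℝ := fun t => 1 - t ^ 2
  have hw (t : ℝ) : HasDerivAt w (-2 * t) t := by
    refine ((hasDerivAt_pow 2 t).const_sub 1).congr_deriv ?_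
    norm_num
  -- This `g` vanishes at `±1`, and `z * g + g'` is a combination of `w ^ (n + 2)`,
  -- `w ^ (n + 1)` and `w ^ n` once `t ^ 2 = 1 - w t` is used.
  have hg (t : ℝ) : HasDerivAt (fun t => z * w t ^ (n + 2) + (2 * n + 4) * (t * w t ^ (n + 1)))
      (z * ((n + 2) * w t ^ (n + 1) * (-2 * t))
        + (2 * n + 4) * (w t ^ (n + 1) + t * ((n + 1) * w t ^ n * (-2 * t)))) t := by
    refine (((hw t).fun_pow (n + 2)).const_mul z).fun_add
      (((hasDerivAt_id' t).fun_mul ((hw t).fun_pow (n + 1))).const_mul (2 * (n : ℝ) + 4))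
      |>.congr_deriv ?_
    push_cast
    ring
  have h := integral_exp_mul_mul_add_deriv hg (by fun_prop) z (-1) 1
  have hf (k : ℕ) :
      IntervalIntegrable (fun t => exp (z * t) * w t ^ k) MeasureTheory.volume (-1) 1 :=
    (by fun_prop : Continuous fun t => exp (z * t) * w t ^ k).intervalIntegrable _ _
  rw [integral_congr (g := fun t => z ^ 2 * (exp (z * t) * w t ^ (n + 2))
      + (2 * n + 3) * (2 * n + 4) * (exp (z * t) * w t ^ (n + 1))
      - 4 * (n + 1) * (n + 2) * (exp (z * t) * w t ^ n)) fun t _ => by simp only [w]; ring,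
    integral_sub (((hf _).const_mul _).add ((hf _).const_mul _)) ((hf _).const_mul _),
    integral_add ((hf _).const_mul _) ((hf _).const_mul _),
    integral_const_mul, integral_const_mul, integral_const_mul] at h
  simp only [w] at h
  unfold lambertIntegral
  linear_combination h

def ThreeTermRecurrence (a c u : ℕ → ℝ) : Prop :=
  ∀ n : ℕ, u (n + 2) = a n * u (n + 1) + c n * u n

namespace ThreeTermRecurrence

variable {a c u v : ℕ → ℝ}

lemma const_mul (hu : ThreeTermRecurrence a c u) (k : ℝ) :
    ThreeTermRecurrence a c fun n => k * u n := fun n => by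
  simp only [hu n]
  ring

lemma sub (hu : ThreeTermRecurrence a c u) (hv : ThreeTermRecurrence a c v) :
    ThreeTermRecurrence a c fun n => u n - v n := fun n => by
  simp only [hu n, hv n]
  ring

lemma ext (hu : ThreeTermRecurrence a c u) (hv : ThreeTermRecurrence a c v) (h0 : u 0 = v 0)
    (h1 : u 1 = v 1) : u = v := by
  funext n
  induction n using Nat.twoStepInduction with
  | zero => exact h0
  | one => exact h1
  | more n hn hn' => rw [hu n, hv n, hn, hn']

lemma one_le (hu : ThreeTermRecurrence a c u) (ha : ∀ n, 1 ≤ a n) (hc : ∀ n, 0 ≤ c n)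
    (h0 : 1 ≤ u 0) (h1 : 1 ≤ u 1) (n : ℕ) : 1 ≤ u n := by
  induction n using Nat.twoStepInduction with
  | zero => exact h0
  | one => exact h1
  | more n hn hn' =>
    rw [hu n]
    nlinarith [mul_nonneg (hc n) (zero_le_one.trans hn), ha n]

end ThreeTermRecurrence

lemma threeTermRecurrence_of_int {z : ℝ} {u b : ℤ → ℝ} (hb : ∀ n : ℤ, 1 ≤ n → b n = z ^ 2)
    (hu : ∀ n : ℤ, 1 ≤ n → u n = (2 * (n : ℝ) - 1) * u (n - 1) + b (n - 1) * u (n - 2)) :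
    ThreeTermRecurrence (fun n => 2 * n + 3) (fun _ => z ^ 2) fun n : ℕ => u n := fun n => by
  have h := hu (n + 2) (by omega)
  rw [show (n : ℤ) + 2 - 1 = n + 1 by ring, show (n : ℤ) + 2 - 2 = n by ring,
    hb (n + 1) (by omega)] at h
  push_cast at h ⊢
  rw [h]
  ring

noncomputable def lambertRemainder (z : ℝ) (n : ℕ) : ℝ :=
  (-1) ^ (n + 1) * z ^ (2 * n + 1) / (2 ^ (n + 1) * n !) * lambertIntegral z n

lemma lambertRemainder_zero (z : ℝ) : lambertRemainder z 0 = -sinh z := by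
  have h := mul_lambertIntegral_zero z
  simp only [lambertRemainder]
  norm_num
  linear_combination -h / 2

lemma lambertRemainder_one (z : ℝ) : lambertRemainder z 1 = z * cosh z - sinh z := by
  have h := lambertIntegral_one z
  simp only [lambertRemainder]
  norm_num
  linear_combination h / 4

lemma threeTermRecurrence_lambertRemainder (z : ℝ) :
    ThreeTermRecurrence (fun n => 2 * n + 3) (fun _ => z ^ 2) (lambertRemainder z) := by
  intro n
  have h := lambertIntegral_add_two z n
  simp only [lambertRemainder, Nat.factorial_succ]
  push_cast
  field_simp
  linear_combination ((-1) ^ (n + 3) * z ^ (2 * n + 3) * 2 ^ (2 * n + 3)) * h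

lemma abs_lambertRemainder_le (z : ℝ) (n : ℕ) :
    |lambertRemainder z n| ≤ exp |z| * |z| * ((z ^ 2 / 2) ^ n / n !) := by
  calc |lambertRemainder z n|
      = |z| ^ (2 * n + 1) / (2 ^ (n + 1) * n !) * |lambertIntegral z n| := by
        simp [lambertRemainder, abs_mul, abs_div]
    _ ≤ |z| ^ (2 * n + 1) / (2 ^ (n + 1) * n !) * (2 * exp |z|) := by
        gcongr
        exact abs_lambertIntegral_le z n
    _ = exp |z| * |z| * ((z ^ 2 / 2) ^ n / n !) := by
        rw [← sq_abs z, div_pow, ← pow_mul]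
        field_simp
        ring

lemma tendsto_lambertRemainder (z : ℝ) : Tendsto (lambertRemainder z) atTop (𝓝 0) := by
  have h := (FloorSemiring.tendsto_pow_div_factorial_atTop (z ^ 2 / 2)).const_mul (exp |z| * |z|)
  rw [mul_zero] at h
  exact squeeze_zero_norm (abs_lambertRemainder_le z) h

lemma abs_div_sub_tanh_le (z : ℝ) {p q : ℝ} (hq : 1 ≤ q) :
    |p / q - tanh z| ≤ |cosh z * p - sinh z * q| := by
  have hqc : 1 ≤ q * cosh z := one_le_mul_of_one_le_of_one_le hq (one_le_cosh z)
  calc |p / q - tanh z| = |cosh z * p - sinh z * q| / (q * cosh z) := by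
        rw [← abs_of_pos (zero_lt_one.trans_le hqc), ← abs_div, tanh_eq_sinh_div_cosh]
        congr 1
        field_simp
    _ ≤ |cosh z * p - sinh z * q| := div_le_self (abs_nonneg _) hqc

theorem tanh_cf (z : ℝ) (p q b : ℤ → ℝ)
    (hb0 : b 0 = z) (hb : ∀ n : ℤ, 1 ≤ n → b n = z ^ 2)
    (hpm1 : p (-1) = 1) (hp0 : p 0 = 0) (hqm1 : q (-1) = 0) (hq0 : q 0 = 1)
    (hp : ∀ n : ℤ, 1 ≤ n →
      p n = (2 * (n : ℝ) - 1) * p (n - 1) + b (n - 1) * p (n - 2))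
    (hq : ∀ n : ℤ, 1 ≤ n →
      q n = (2 * (n : ℝ) - 1) * q (n - 1) + b (n - 1) * q (n - 2)) :
    Tendsto (fun n : ℕ => p n / q n) atTop (nhds (Real.tanh z)) := by
  have hp1 : p 1 = z := by norm_num [hp 1 le_rfl, hp0, hpm1, hb0]
  have hq1 : q 1 = 1 := by norm_num [hq 1 le_rfl, hq0, hqm1]
  have hP := threeTermRecurrence_of_int hb hp
  have hQ := threeTermRecurrence_of_int hb hq
  have hremainder : (fun n : ℕ => cosh z * p n - sinh z * q n) = lambertRemainder z :=
    ((hP.const_mul _).sub (hQ.const_mul _)).ext (threeTermRecurrence_lambertRemainder z)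
      (by simp [hp0, hq0, lambertRemainder_zero])
      (by simp [hp1, hq1, lambertRemainder_one, mul_comm])
  have hq_ge (n : ℕ) : 1 ≤ q n :=
    hQ.one_le (fun n => by linarith [n.cast_nonneg (α := ℝ)]) (fun _ => sq_nonneg z)
      (by simp [hq0]) (by simp [hq1]) n
  have herr (n : ℕ) : ‖p n / q n - tanh z‖ ≤ ‖lambertRemainder z n‖ := by
    rw [norm_eq_abs, norm_eq_abs, ← congrFun hremainder n]
    exact abs_div_sub_tanh_le z (hq_ge n)
  exact tendsto_sub_nhds_zero_iff.1 <|
    squeeze_zero_norm herr (tendsto_zero_iff_norm_tendsto_zero.1 (tendsto_lambertRemainder z))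
end

section
/- Let z > 0 be real. Define sequences p, q by p(-1)=1, p(0)=0, q(-1)=0, q(0)=1, p(1) = z·p(0) + 1·p(-1), q(1) = z·q(0) + 1·q(-1), and for n ≥ 2: p(n) = p(n-1) + (n+z-2)²·p(n-2), q(n) = q(n-1) + (n+z-2)²·q(n-2). Then p(n)/q(n) converges to β(z) = Σ_{k≥0} (-1)^k/(k+z) as n → ∞. -/
/-!
Both `p` and `q` solve the second-order recurrence `f (n + 2) = f (n + 1) + (n + z)² f n`, so they
are determined by their first two values.  The Pochhammer symbol `(z)ₙ = z (z + 1) ⋯ (z + n - 1)`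
solves it with initial values `1, z`, and so does `Sₙ (z)ₙ`, where `Sₙ` is the `n`-th partial sum
of `β(z)`, with initial values `0, 1`.  Hence `q n = (z)ₙ`, `p n = Sₙ (z)ₙ` and `p n / q n = Sₙ`.
-/

open Filter Finset Polynomial

theorem eq_of_two_step_recurrence_s9 {R : Type*} [Semiring R] {c f g : ℕ → R}
    (hf : ∀ n, f (n + 2) = f (n + 1) + c n * f n) (hg : ∀ n, g (n + 2) = g (n + 1) + c n * g n)
    (h0 : f 0 = g 0) (h1 : f 1 = g 1) : f = g := by
  funext n
  induction n using Nat.twoStepInduction with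
  | zero => exact h0
  | one => exact h1
  | more n ihn ihn1 => rw [hf, hg, ihn, ihn1]

theorem nat_recurrence_of_int_recurrence {f : ℤ → ℝ} {z : ℝ}
    (hf : ∀ n : ℤ, 2 ≤ n → f n = f (n - 1) + ((n : ℝ) + z - 2) ^ 2 * f (n - 2)) (n : ℕ) :
    f ↑(n + 2) = f ↑(n + 1) + ((n : ℝ) + z) ^ 2 * f n := by
  have h := hf (n + 2) (by omega)
  push_cast at h ⊢
  rw [h, show (n : ℤ) + 2 - 1 = n + 1 by ring, add_sub_cancel_right]
  ring

theorem ascPochhammer_eval_add_two (z : ℝ) (n : ℕ) :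
    (ascPochhammer ℝ (n + 2)).eval z =
      (ascPochhammer ℝ (n + 1)).eval z + ((n : ℝ) + z) ^ 2 * (ascPochhammer ℝ n).eval z := by
  simp only [ascPochhammer_succ_eval]
  push_cast
  ring

noncomputable def betaPartialSum (z : ℝ) (N : ℕ) : ℝ :=
  ∑ k ∈ range N, (-1 : ℝ) ^ k / ((k : ℝ) + z)

theorem betaPartialSum_mul_ascPochhammer_add_two {z : ℝ} (hz : ∀ k : ℕ, (k : ℝ) + z ≠ 0)
    (n : ℕ) :
    betaPartialSum z (n + 2) * (ascPochhammer ℝ (n + 2)).eval z =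
      betaPartialSum z (n + 1) * (ascPochhammer ℝ (n + 1)).eval z +
        ((n : ℝ) + z) ^ 2 * (betaPartialSum z n * (ascPochhammer ℝ n).eval z) := by
  have hn := hz n
  have hn1 : (n : ℝ) + 1 + z ≠ 0 := by exact_mod_cast hz (n + 1)
  simp only [betaPartialSum, sum_range_succ, ascPochhammer_succ_eval]
  generalize ∑ k ∈ range n, (-1 : ℝ) ^ k / ((k : ℝ) + z) = S
  push_cast
  field_simp
  ring

theorem beta_cf (z : ℝ) (hz : 0 < z) (β : ℝ)
    (hβ : Tendsto (fun N : ℕ => ∑ k ∈ Finset.range N, (-1 : ℝ) ^ k / ((k : ℝ) + z))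
      atTop (nhds β))
    (p q : ℤ → ℝ)
    (hpm1 : p (-1) = 1) (hp0 : p 0 = 0) (hqm1 : q (-1) = 0) (hq0 : q 0 = 1)
    (hp1 : p 1 = z * p 0 + 1 * p (-1)) (hq1 : q 1 = z * q 0 + 1 * q (-1))
    (hp : ∀ n : ℤ, 2 ≤ n →
      p n = p (n - 1) + ((n : ℝ) + z - 2) ^ 2 * p (n - 2))
    (hq : ∀ n : ℤ, 2 ≤ n →
      q n = q (n - 1) + ((n : ℝ) + z - 2) ^ 2 * q (n - 2)) :
    Tendsto (fun n : ℕ => p n / q n) atTop (nhds β) := by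
  have hq_eq : (fun n : ℕ => q n) = fun n => (ascPochhammer ℝ n).eval z :=
    eq_of_two_step_recurrence_s9 (nat_recurrence_of_int_recurrence hq) (ascPochhammer_eval_add_two z)
      (by simpa using hq0) (by simp [hq1, hq0, hqm1])
  have hp_eq : (fun n : ℕ => p n) = fun n => betaPartialSum z n * (ascPochhammer ℝ n).eval z :=
    eq_of_two_step_recurrence_s9 (nat_recurrence_of_int_recurrence hp)
      (betaPartialSum_mul_ascPochhammer_add_two fun k => by positivity)
      (by simp [hp0, betaPartialSum]) (by simp [hp1, hp0, hpm1, betaPartialSum, hz.ne'])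
  refine hβ.congr fun n => ?_
  rw [congrFun hp_eq n, congrFun hq_eq n, mul_div_cancel_right₀ _ (ascPochhammer_pos n z hz).ne']
  rfl
end

section
/- For every real z, sinh(πz)/(πz) = 1 + z²·Σ_{n=0}^∞ (∏_{j=1}^{n} (j² + z²)) / ((n+1)!)², where for z = 0 the left side is interpreted as 1. -/
/-!
Euler's product `sin (π w) = π w ∏ (1 - w² / n²)` at `w = i z` shows that the partial products
`P N = ∏_{j ≤ N} (1 + z² / j²)` tend to `sinh (π z) / (π z)`. The increment
`P (n + 1) - P n = z² / (n + 1)² · P n = z² ∏_{j ≤ n} (j² + z²) / ((n + 1)!)²` is `z²` times the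
`n`-th term of the series, so the series telescopes to `(sinh (π z) / (π z) - 1) / z²`; its terms
are nonnegative, so convergence of the partial sums is enough.
-/

open Real Filter Topology Finset Nat

theorem Finset.prod_range_one_add {R : Type*} [CommSemiring R] (f : ℕ → R) (N : ℕ) :
    ∏ i ∈ range N, (1 + f i) = 1 + ∑ n ∈ range N, f n * ∏ i ∈ range n, (1 + f i) := by
  induction N with
  | zero => simp
  | succ N ih => rw [prod_range_succ, sum_range_succ, ← add_assoc, ← ih]; ring

theorem prod_range_one_add_div_sq {K : Type*} [Field K] [CharZero K] (x : K) (n : ℕ) :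
    ∏ j ∈ range n, (1 + x / ((j : K) + 1) ^ 2) =
      (∏ j ∈ Icc 1 n, ((j : K) ^ 2 + x)) / (n ! : K) ^ 2 := by
  induction n with
  | zero => simp
  | succ n ih =>
    rw [prod_range_succ, ih, prod_Icc_succ_top (Nat.le_add_left 1 n), factorial_succ]
    push_cast
    field_simp

theorem Complex.tendsto_prod_one_add_sq_div_sq {z : ℂ} (hz : z ≠ 0) :
    Tendsto (fun n : ℕ ↦ ∏ j ∈ range n, (1 + z ^ 2 / ((j : ℂ) + 1) ^ 2)) atTop
      (𝓝 (Complex.sinh (π * z) / (π * z))) := by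
  have h := _root_.tendsto_euler_sin_prod' (mul_ne_zero hz Complex.I_ne_zero)
  rw [← mul_assoc, Complex.sin_mul_I, mul_div_mul_right _ _ Complex.I_ne_zero] at h
  refine h.congr fun n ↦ prod_congr rfl fun j _ ↦ ?_
  rw [sineTerm, mul_pow, Complex.I_sq]
  ring

theorem Real.tendsto_prod_one_add_sq_div_sq {z : ℝ} (hz : z ≠ 0) :
    Tendsto (fun n : ℕ ↦ ∏ j ∈ range n, (1 + z ^ 2 / ((j : ℝ) + 1) ^ 2)) atTop
      (𝓝 (sinh (π * z) / (π * z))) := by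
  rw [← Filter.tendsto_ofReal_iff]
  push_cast
  exact Complex.tendsto_prod_one_add_sq_div_sq (Complex.ofReal_ne_zero.mpr hz)

theorem hasSum_sq_mul_prod_div_factorial_sq {z : ℝ} (hz : z ≠ 0) :
    HasSum (fun n : ℕ ↦ z ^ 2 * ((∏ j ∈ Icc 1 n, ((j : ℝ) ^ 2 + z ^ 2)) / ((n + 1) ! : ℝ) ^ 2))
      (sinh (π * z) / (π * z) - 1) := by
  have hterm (n : ℕ) : z ^ 2 * ((∏ j ∈ Icc 1 n, ((j : ℝ) ^ 2 + z ^ 2)) / ((n + 1) ! : ℝ) ^ 2) =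
      z ^ 2 / ((n : ℝ) + 1) ^ 2 * ∏ j ∈ range n, (1 + z ^ 2 / ((j : ℝ) + 1) ^ 2) := by
    rw [prod_range_one_add_div_sq, factorial_succ]
    push_cast
    field_simp
  refine (hasSum_iff_tendsto_nat_of_nonneg (fun n ↦ by positivity) _).mpr ?_
  refine ((Real.tendsto_prod_one_add_sq_div_sq hz).sub_const 1).congr fun N ↦ ?_
  rw [prod_range_one_add, add_sub_cancel_left]
  exact sum_congr rfl fun n _ ↦ (hterm n).symm

theorem sinh_pi_z_series (z : ℝ) :
    (if z = 0 then (1 : ℝ) else Real.sinh (π * z) / (π * z)) =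
      1 + z ^ 2 * ∑' n : ℕ,
        (∏ j ∈ Finset.Icc 1 n, ((j : ℝ) ^ 2 + z ^ 2)) / ((n + 1).factorial : ℝ) ^ 2 := by
  rcases eq_or_ne z 0 with rfl | hz
  · simp
  · rw [if_neg hz, ← tsum_mul_left, (hasSum_sq_mul_prod_div_factorial_sq hz).tsum_eq]
    ring
end

section
/- For every real z, cosh(πz) = 1 + 4z²·Σ_{n=0}^∞ (∏_{j=0}^{n-1} ((2j+1)² + 4z²)) / (∏_{j=0}^{n-1} (2j+3)²). -/
open Real

/-!
Euler's sine product at `i x` gives `sinh (π x) = π x ∏ (1 + x² / k²)`. In the product for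
`sinh (2π x)` the factors with even `k` reassemble the product for `2 sinh (π x)`, so dividing
leaves `cosh (π x) = ∏_{j ≥ 0} (1 + 4x² / (2j + 1)²)`. The series telescopes to these partial
products: the `n`-th partial product exceeds the previous one by `4x² / (2n + 1)²` times it.
-/

open Filter Topology Finset

theorem Real.tendsto_euler_sinh_prod (x : ℝ) :
    Tendsto (fun n : ℕ => π * x * ∏ j ∈ range n, (1 + x ^ 2 / ((j : ℝ) + 1) ^ 2))
      atTop (𝓝 (sinh (π * x))) := by
  rw [← tendsto_ofReal_iff]
  convert (Complex.tendsto_euler_sin_prod (x * Complex.I)).const_mul (-Complex.I) using 2 with n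
  · push_cast
    simp only [mul_pow, Complex.I_sq]
    ring_nf
    simp only [Complex.I_sq]
    ring
  · rw [← mul_assoc, Complex.sin_mul_I, ← mul_assoc, mul_comm (-Complex.I), mul_assoc,
      neg_mul, Complex.I_mul_I, neg_neg, mul_one, Complex.ofReal_sinh, Complex.ofReal_mul]

theorem Finset.prod_range_two_mul {M : Type*} [CommMonoid M] (f : ℕ → M) (n : ℕ) :
    ∏ j ∈ range (2 * n), f j = (∏ j ∈ range n, f (2 * j)) * ∏ j ∈ range n, f (2 * j + 1) := by
  induction n with
  | zero => simp
  | succ n ih =>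
    rw [Nat.mul_succ, prod_range_succ, prod_range_succ, ih, prod_range_succ, prod_range_succ]
    ac_rfl

theorem Finset.one_add_mul_sum_eq_prod_one_add_div {K : Type*} [Field K] (b : ℕ → K)
    (hb : ∀ j, b j ≠ 0) (c : K) (n : ℕ) :
    1 + c * ∑ k ∈ range n, (∏ j ∈ range k, (b j + c)) / ∏ j ∈ range (k + 1), b j =
      ∏ j ∈ range n, (1 + c / b j) := by
  induction n with
  | zero => simp
  | succ n ih =>
    have hprod : ∏ j ∈ range n, (1 + c / b j) = (∏ j ∈ range n, (b j + c)) / ∏ j ∈ range n, b j := by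
      rw [← prod_div_distrib]
      exact prod_congr rfl fun j _ => by field_simp [hb j]
    rw [sum_range_succ, mul_add, ← add_assoc, ih, prod_range_succ (fun j => 1 + c / b j),
      prod_range_succ b, hprod]
    have hB : ∏ j ∈ range n, b j ≠ 0 := prod_ne_zero_iff.mpr fun j _ => hb j
    field_simp [hb n, hB]

theorem Real.tendsto_cosh_prod (x : ℝ) :
    Tendsto (fun n : ℕ => ∏ j ∈ range n, (1 + 4 * x ^ 2 / (2 * (j : ℝ) + 1) ^ 2))
      atTop (𝓝 (cosh (π * x))) := by
  rcases eq_or_ne x 0 with rfl | hx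
  · simp
  set S : ℝ → ℕ → ℝ := fun y n => π * y * ∏ j ∈ range n, (1 + y ^ 2 / ((j : ℝ) + 1) ^ 2)
  have hS_ne : ∀ n, S x n ≠ 0 := fun n =>
    mul_ne_zero (mul_ne_zero pi_ne_zero hx) (prod_ne_zero_iff.mpr fun j _ => by positivity)
  have hsplit : ∀ n, S (2 * x) (2 * n) =
      2 * S x n * ∏ j ∈ range n, (1 + 4 * x ^ 2 / (2 * (j : ℝ) + 1) ^ 2) := by
    intro n
    have h_even : ∀ j ∈ range n, 1 + (2 * x) ^ 2 / ((↑(2 * j) : ℝ) + 1) ^ 2 =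
        1 + 4 * x ^ 2 / (2 * (j : ℝ) + 1) ^ 2 := fun j _ => by push_cast; ring
    have h_odd : ∀ j ∈ range n, 1 + (2 * x) ^ 2 / ((↑(2 * j + 1) : ℝ) + 1) ^ 2 =
        1 + x ^ 2 / ((j : ℝ) + 1) ^ 2 := fun j _ => by
      push_cast
      field_simp
      ring
    simp only [S, prod_range_two_mul, prod_congr rfl h_even, prod_congr rfl h_odd]
    ring
  have hsinh : sinh (π * x) ≠ 0 := sinh_ne_zero.mpr (mul_ne_zero pi_ne_zero hx)
  have hlim := ((tendsto_euler_sinh_prod (2 * x)).comp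
    (tendsto_id.const_mul_atTop' two_pos)).div ((tendsto_euler_sinh_prod x).const_mul 2)
    (mul_ne_zero two_ne_zero hsinh)
  have hval : sinh (π * (2 * x)) / (2 * sinh (π * x)) = cosh (π * x) := by
    rw [mul_left_comm, sinh_two_mul]
    field_simp [hsinh]
  rw [hval] at hlim
  refine hlim.congr fun n => ?_
  simp only [Function.comp_apply, id, Pi.div_apply]
  change S (2 * x) (2 * n) / (2 * S x n) = _
  rw [hsplit, mul_div_cancel_left₀ _ (mul_ne_zero two_ne_zero (hS_ne n))]

theorem cosh_pi_z_series (z : ℝ) :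
    Real.cosh (π * z) =
      1 + 4 * z ^ 2 * ∑' n : ℕ,
        (∏ j ∈ Finset.range n, ((2 * (j : ℝ) + 1) ^ 2 + 4 * z ^ 2)) /
          ∏ j ∈ Finset.range n, (2 * (j : ℝ) + 3) ^ 2 := by
  rcases eq_or_ne z 0 with rfl | hz
  · simp
  have hc : (4 : ℝ) * z ^ 2 ≠ 0 := by positivity
  -- the `k`-th term has denominator `∏ j < k + 1, (2j + 1)²`, whose first factor is `1`
  have hpartial : ∀ n : ℕ, 1 + 4 * z ^ 2 * ∑ k ∈ range n,
      (∏ j ∈ range k, ((2 * (j : ℝ) + 1) ^ 2 + 4 * z ^ 2)) / ∏ j ∈ range k, (2 * (j : ℝ) + 3) ^ 2 =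
      ∏ j ∈ range n, (1 + 4 * z ^ 2 / (2 * (j : ℝ) + 1) ^ 2) := fun n => by
    rw [← one_add_mul_sum_eq_prod_one_add_div _ fun j => by positivity]
    simp only [prod_range_succ', Nat.cast_add, Nat.cast_one, Nat.cast_zero]
    norm_num [add_assoc, mul_add]
  rw [← sub_eq_iff_eq_add', mul_comm (4 * z ^ 2), ← div_eq_iff hc]
  refine (HasSum.tsum_eq ?_).symm
  rw [hasSum_iff_tendsto_nat_of_nonneg fun k => by positivity]
  refine (((tendsto_cosh_prod z).sub_const 1).div_const _).congr fun n => ?_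
  rw [← hpartial, add_sub_cancel_left, mul_div_cancel_left₀ _ hc]
end

section
/- 28·ζ(3) - π³ = 64·Σ_{n=0}^∞ 1/(4n+3)³. -/
/-!
Write `A = ∑ 1/(4n+1)³` and `B = ∑ 1/(4n+3)³`. Removing the even terms from `ζ(3)` gives
`A + B = 7ζ(3)/8`, and the Fourier expansion of the Bernoulli polynomial at `1/4`
(`hasSum_L_function_mod_four_eval_three`) gives `A - B = π³/32`. Hence `64 B = 28ζ(3) - π³`.
-/

open Real

theorem HasSum.comp_two_mul_add_one {M : Type*} [AddCommMonoid M] [TopologicalSpace M]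
    {f : ℕ → M} {a : M} (hf : HasSum f a) (h_even : ∀ n, f (2 * n) = 0) :
    HasSum (fun n ↦ f (2 * n + 1)) a := by
  refine (Function.Injective.hasSum_iff (g := fun n ↦ 2 * n + 1) (fun m n h ↦ by simpa using h)
    fun x hx ↦ ?_).mpr hf
  obtain ⟨k, rfl | rfl⟩ := Nat.even_or_odd' x
  · exact h_even k
  · exact absurd ⟨k, rfl⟩ hx

theorem HasSum.two_mul_odd_of_alternating {R : Type*} [Ring R] [TopologicalSpace R]
    [IsTopologicalRing R] {u : ℕ → R} {a b : R} (ha : HasSum u a)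
    (hb : HasSum (fun n ↦ (-1) ^ n * u n) b) :
    HasSum (fun n ↦ 2 * u (2 * n + 1)) (a - b) := by
  refine ((ha.sub hb).comp_two_mul_add_one fun n ↦ ?_).congr_fun fun n ↦ ?_
  · simp [pow_mul]
  · simp [pow_succ, two_mul]

theorem HasSum.alternating_odd_of_mul_sin_pi_div_two {g : ℕ → ℝ} {s : ℝ}
    (h : HasSum (fun n ↦ g n * sin (π * n / 2)) s) :
    HasSum (fun n ↦ (-1) ^ n * g (2 * n + 1)) s := by
  refine (h.comp_two_mul_add_one fun n ↦ ?_).congr_fun fun n ↦ ?_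
  · have : π * ↑(2 * n) / 2 = n * π := by push_cast; ring
    rw [this, sin_nat_mul_pi, mul_zero]
  · have : π * ↑(2 * n + 1) / 2 = π / 2 + n * π := by push_cast; ring
    rw [this, sin_add_nat_mul_pi, sin_pi_div_two, mul_one, mul_comm]

theorem hasSum_one_div_odd_pow {k : ℕ} (hk : 1 < k) :
    HasSum (fun n : ℕ ↦ 1 / ((2 * n + 1 : ℕ) : ℝ) ^ k)
      ((1 - 1 / 2 ^ k) * ∑' n : ℕ, 1 / (n : ℝ) ^ k) := by
  set u : ℕ → ℝ := fun n ↦ 1 / (n : ℝ) ^ k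
  have hu : Summable u := Real.summable_one_div_nat_pow.mpr hk
  have h_even : HasSum (fun n ↦ u (2 * n)) ((∑' n, u n) / 2 ^ k) :=
    (hu.hasSum.div_const _).congr_fun fun n ↦ by
      simp only [u]; push_cast; rw [mul_pow, div_div, mul_comm]
  have h_odd : HasSum (fun n ↦ u (2 * n + 1)) _ :=
    (hu.comp_injective (i := fun n ↦ 2 * n + 1) fun m n h ↦ by simpa using h).hasSum
  have h_split := (h_even.even_add_odd h_odd).unique hu.hasSum
  convert h_odd using 1
  linear_combination -h_split

theorem hasSum_one_div_four_mul_add_three_pow_three :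
    HasSum (fun n : ℕ ↦ 1 / (4 * n + 3 : ℝ) ^ 3)
      ((28 * ∑' n : ℕ, 1 / (n : ℝ) ^ 3 - π ^ 3) / 64) := by
  have h := (hasSum_one_div_odd_pow (k := 3) (by norm_num)).two_mul_odd_of_alternating
    hasSum_L_function_mod_four_eval_three.alternating_odd_of_mul_sin_pi_div_two
  rw [show (28 * ∑' n : ℕ, 1 / (n : ℝ) ^ 3 - π ^ 3) / 64 =
    ((1 - 1 / 2 ^ 3) * ∑' n : ℕ, 1 / (n : ℝ) ^ 3 - π ^ 3 / 32) / 2 by ring]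
  exact (h.div_const 2).congr_fun fun n ↦ by push_cast; ring

theorem zeta3_pi_cubed_series :
    28 * riemannZeta 3 - (π : ℂ) ^ 3 =
      64 * ∑' n : ℕ, (1 : ℂ) / (4 * (n : ℂ) + 3) ^ 3 := by
  have hζ : riemannZeta 3 = ((∑' n : ℕ, 1 / (n : ℝ) ^ 3 : ℝ) : ℂ) := by
    rw [show (3 : ℂ) = (3 : ℕ) by norm_num, zeta_nat_eq_tsum_of_gt_one (by norm_num),
      Complex.ofReal_tsum]
    push_cast; rfl
  have hsum : ∑' n : ℕ, (1 : ℂ) / (4 * (n : ℂ) + 3) ^ 3 =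
      ((∑' n : ℕ, 1 / (4 * n + 3 : ℝ) ^ 3 : ℝ) : ℂ) := by
    rw [Complex.ofReal_tsum]; push_cast; rfl
  rw [hζ, hsum, hasSum_one_div_four_mul_add_three_pow_three.tsum_eq]
  push_cast; ring
end

section
/- ζ(5) + 3·ζ(3) = 9/2 + Σ_{n=0}^∞ 1 / ((3n²+3n+1)·(3n²+9n+7)·(n+1)⁵). -/
/-!
Write `y = n + 1`, so that `3n² + 3n + 1 = 3y² - 3y + 1` and `3n² + 9n + 7 = 3y² + 3y + 1`.
Their product is `9y⁴ - 3y² + 1`, and `(3y² + 1)(9y⁴ - 3y² + 1) = 27y⁶ + 1` (a sum of cubes), so the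
summand is `1/y⁵ + 3/y³ - 27y / ((3y² - 3y + 1)(3y² + 3y + 1))`. As the two quadratics differ by
`6y`, the last term is `9/2 · (1/u(n) - 1/u(n+1))` with `u(n) = 3n² + 3n + 1`; it telescopes to
`9/2 · 1/u(0) = 9/2`.
-/

lemma summable_one_div_nat_add_one_pow {k : ℕ} (hk : 1 < k) :
    Summable fun n : ℕ => 1 / ((n : ℂ) + 1) ^ k := by
  have h := (summable_nat_add_iff 1).2 ((Complex.summable_one_div_nat_cpow (p := k)).2 (by simpa))
  simpa [Complex.cpow_natCast] using h

lemma zeta_nat_eq_tsum_one_div_nat_add_one_pow {k : ℕ} (hk : 1 < k) :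
    riemannZeta k = ∑' n : ℕ, 1 / ((n : ℂ) + 1) ^ k := by
  simpa [Complex.cpow_natCast] using zeta_eq_tsum_one_div_nat_add_one_cpow (s := k) (by simpa)

lemma Summable.tsum_sub_succ {G : Type*} [AddCommGroup G] [TopologicalSpace G]
    [IsTopologicalAddGroup G] [T2Space G] {f : ℕ → G} (hf : Summable f) :
    ∑' n, (f n - f (n + 1)) = f 0 := by
  rw [hf.tsum_sub ((summable_nat_add_iff 1).2 hf), hf.tsum_eq_zero_add, add_sub_cancel_right]

lemma summable_one_div_three_mul_sq_add_three_mul_add_one :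
    Summable fun n : ℕ => 1 / (3 * (n : ℂ) ^ 2 + 3 * n + 1) := by
  refine Summable.of_norm_bounded (g := fun n : ℕ => 1 / ((n : ℝ) + 1) ^ 2)
    ((summable_nat_add_iff 1).2 (Real.summable_one_div_nat_pow.2 one_lt_two) |>.congr
      fun n => by push_cast; rfl) fun n => ?_
  have hcast : 3 * (n : ℂ) ^ 2 + 3 * n + 1 = ((3 * (n : ℝ) ^ 2 + 3 * n + 1 : ℝ) : ℂ) := by
    push_cast; rfl
  rw [hcast, norm_div, norm_one, Complex.norm_of_nonneg (by positivity)]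
  gcongr
  nlinarith

lemma one_div_mul_mul_pow_five_eq {K : Type*} [Field K] [NeZero (2 : K)] {x : K}
    (hx : x + 1 ≠ 0) (hu : 3 * x ^ 2 + 3 * x + 1 ≠ 0) (hv : 3 * x ^ 2 + 9 * x + 7 ≠ 0) :
    1 / ((3 * x ^ 2 + 3 * x + 1) * (3 * x ^ 2 + 9 * x + 7) * (x + 1) ^ 5) =
      1 / (x + 1) ^ 5 + 3 * (1 / (x + 1) ^ 3) -
        (9 / 2 * (1 / (3 * x ^ 2 + 3 * x + 1)) -
          9 / 2 * (1 / (3 * (x + 1) ^ 2 + 3 * (x + 1) + 1))) := by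
  rw [show 3 * (x + 1) ^ 2 + 3 * (x + 1) + 1 = 3 * x ^ 2 + 9 * x + 7 by ring]
  generalize hu' : 3 * x ^ 2 + 3 * x + 1 = u at *
  generalize hv' : 3 * x ^ 2 + 9 * x + 7 = v at *
  field_simp
  subst hu' hv'
  ring

theorem zeta5_add_three_zeta3_series :
    riemannZeta 5 + 3 * riemannZeta 3 =
      9 / 2 + ∑' n : ℕ, (1 : ℂ) /
        ((3 * (n : ℂ) ^ 2 + 3 * (n : ℂ) + 1) * (3 * (n : ℂ) ^ 2 + 9 * (n : ℂ) + 7) *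
          ((n : ℂ) + 1) ^ 5) := by
  set f : ℕ → ℂ := fun n => 9 / 2 * (1 / (3 * (n : ℂ) ^ 2 + 3 * n + 1))
  have hterm (n : ℕ) :
      1 / ((3 * (n : ℂ) ^ 2 + 3 * n + 1) * (3 * (n : ℂ) ^ 2 + 9 * n + 7) * ((n : ℂ) + 1) ^ 5) =
        1 / ((n : ℂ) + 1) ^ 5 + 3 * (1 / ((n : ℂ) + 1) ^ 3) - (f n - f (n + 1)) := by
    simpa [f] using one_div_mul_mul_pow_five_eq (x := (n : ℂ)) (Nat.cast_add_one_ne_zero n)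
      (by norm_cast) (by norm_cast)
  have hf : Summable f := summable_one_div_three_mul_sq_add_three_mul_add_one.mul_left _
  have h5 := summable_one_div_nat_add_one_pow (k := 5) (by norm_num)
  have h3 := (summable_one_div_nat_add_one_pow (k := 3) (by norm_num)).mul_left 3
  rw [tsum_congr hterm, (h5.add h3).tsum_sub (hf.sub ((summable_nat_add_iff 1).2 hf)),
    h5.tsum_add h3, tsum_mul_left, hf.tsum_sub_succ,
    ← zeta_nat_eq_tsum_one_div_nat_add_one_pow (by norm_num),
    ← zeta_nat_eq_tsum_one_div_nat_add_one_pow (by norm_num)]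
  norm_num [f]
end

section
/- ζ(3) - ζ(5) = 1/2 - Σ_{n=0}^∞ 1 / ((n²+n+1)·(n²+3n+3)·(n+1)⁵). -/
open Filter Topology

/-! Put `k = n + 1`. The two quadratics are `k² - k + 1` and `k² + k + 1`: they differ by `2k` and
their product is `k⁴ + k² + 1`, so `(k² - 1)(k⁴ + k² + 1) = k⁶ - 1` gives
`1/k³ - 1/k⁵ = ½ (1/(k² - k + 1) - 1/(k² + k + 1)) - 1/((k⁴ + k² + 1) k⁵)`.
The first part telescopes to `½`, and the other two sum to `ζ(3) - ζ(5)`. -/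

lemma hasSum_sub_succ_of_antitone {f : ℕ → ℝ} {l : ℝ} (hf : Antitone f)
    (hl : Tendsto f atTop (𝓝 l)) : HasSum (fun n ↦ f n - f (n + 1)) (f 0 - l) := by
  refine (hasSum_iff_tendsto_nat_of_nonneg (fun n ↦ sub_nonneg.2 (hf n.le_succ)) _).2 ?_
  simpa only [Finset.sum_range_sub'] using tendsto_const_nhds.sub hl

lemma hasSum_one_div_nat_add_one_pow_riemannZeta {k : ℕ} (hk : 1 < k) :
    HasSum (fun n : ℕ ↦ 1 / ((n : ℂ) + 1) ^ k) (riemannZeta k) := by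
  have hs : Summable (fun n : ℕ ↦ 1 / (n : ℂ) ^ k) := by
    simpa using (Complex.summable_one_div_nat_cpow (p := k)).2 (by simpa using hk)
  rw [zeta_nat_eq_tsum_of_gt_one hk, hs.tsum_eq_zero_add]
  simpa [zero_pow (by omega : k ≠ 0)] using ((summable_nat_add_iff 1).2 hs).hasSum

lemma one_div_pow_three_sub_one_div_pow_five {K : Type*} [Field K] {x : K} (h2 : (2 : K) ≠ 0)
    (hx : x + 1 ≠ 0) (hv : x ^ 2 + x + 1 ≠ 0) (hw : x ^ 2 + 3 * x + 3 ≠ 0) :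
    1 / (x + 1) ^ 3 - 1 / (x + 1) ^ 5 =
      1 / (2 * (x ^ 2 + x + 1)) - 1 / (2 * (x ^ 2 + 3 * x + 3)) -
        1 / ((x ^ 2 + x + 1) * (x ^ 2 + 3 * x + 3) * (x + 1) ^ 5) := by
  rw [div_sub_div _ _ (by positivity) (by positivity),
    div_sub_div _ _ (by positivity) (by positivity),
    div_sub_div _ _ (by positivity) (by positivity),
    div_eq_div_iff (by positivity) (by positivity)]
  ring

lemma hasSum_one_div_two_mul_quadratic_telescoping :
    HasSum (fun n : ℕ ↦ 1 / (2 * ((n : ℝ) ^ 2 + n + 1)) - 1 / (2 * ((n : ℝ) ^ 2 + 3 * n + 3)))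
      (1 / 2) := by
  set f : ℕ → ℝ := fun n ↦ 1 / (2 * ((n : ℝ) ^ 2 + n + 1))
  have hf : Antitone f := fun m n hmn ↦ by
    simp only [f]
    gcongr
  have hlim : Tendsto f atTop (𝓝 0) := by
    simp only [f, one_div]
    refine tendsto_inv_atTop_zero.comp
      (tendsto_atTop_mono (fun n ↦ ?_) tendsto_natCast_atTop_atTop)
    nlinarith [sq_nonneg (n : ℝ)]
  convert hasSum_sub_succ_of_antitone hf hlim using 1
  · ext n
    simp only [f]
    push_cast
    ring
  · simp [f]

theorem zeta3_sub_zeta5_series :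
    riemannZeta 3 - riemannZeta 5 =
      1 / 2 - ∑' n : ℕ, (1 : ℂ) /
        (((n : ℂ) ^ 2 + (n : ℂ) + 1) * ((n : ℂ) ^ 2 + 3 * (n : ℂ) + 3) *
          ((n : ℂ) + 1) ^ 5) := by
  have hzeta := (hasSum_one_div_nat_add_one_pow_riemannZeta (k := 3) (by norm_num)).sub
    (hasSum_one_div_nat_add_one_pow_riemannZeta (k := 5) (by norm_num))
  have htel := Complex.hasSum_ofReal.2 hasSum_one_div_two_mul_quadratic_telescoping
  push_cast at hzeta htel
  have hseries : HasSum (fun n : ℕ ↦ (1 : ℂ) /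
      (((n : ℂ) ^ 2 + n + 1) * ((n : ℂ) ^ 2 + 3 * n + 3) * ((n : ℂ) + 1) ^ 5))
      (1 / 2 - (riemannZeta 3 - riemannZeta 5)) := by
    refine (htel.sub hzeta).congr_fun fun n ↦ ?_
    rw [one_div_pow_three_sub_one_div_pow_five (x := (n : ℂ)) two_ne_zero (by norm_cast)
      (by norm_cast) (by norm_cast)]
    ring
  rw [hseries.tsum_eq]
  ring
end
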